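/- arXiv:2508.16848 — 3 statements merged into one kernel-verified Lean document; each statement's English description precedes it below -/
import Mathlib

section
/- If a symbol x appears exactly once in a regular expression g, and there exist strings u·x·v' and u'·x·v both in the language of g, then the spliced string u·x·v is also in the language of g. -/
/-- Number of occurrences of the symbol `x` as a leaf of the regex `g`. -/
def countSym {α : Type*} [DecidableEq α] : RegularExpression α → α → ℕ
  | .zero, _ => 0
  | .epsilon, _ => 0
  | .char a, x => if a = x then 1 else 0
  | .plus l r, x => countSym l x + countSym r x
  | .comp l r, x => countSym l x + countSym r x
  | .star g, x => countSym g x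

lemma matchesZero {α : Type*} : (RegularExpression.zero : RegularExpression α).matches' = 0 := rfl
lemma matchesEps {α : Type*} : (RegularExpression.epsilon : RegularExpression α).matches' = 1 := rfl
lemma matchesChar {α : Type*} (a : α) : (RegularExpression.char a).matches' = {[a]} := rfl
lemma matchesPlus {α : Type*} (l r : RegularExpression α) :
    (l.plus r).matches' = l.matches' + r.matches' := rfl
lemma matchesComp {α : Type*} (l r : RegularExpression α) :
    (l.comp r).matches' = l.matches' * r.matches' := rfl
lemma matchesStar {α : Type*} (g : RegularExpression α) :
    g.star.matches' = KStar.kstar g.matches' := rfl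

lemma notMem_of_countSym_zero {α : Type*} [DecidableEq α] :
    ∀ (g : RegularExpression α) (x : α), countSym g x = 0 →
      ∀ s ∈ g.matches', x ∉ s := by
  intro g x
  induction g with
  | zero => intro _ s hs; simp [matchesZero] at hs
  | epsilon =>
      intro _ s hs
      rw [matchesEps, Language.mem_one] at hs
      simp [hs]
  | char a =>
      intro h s hs
      rw [matchesChar] at hs
      change s = [a] at hs
      subst hs
      simp only [countSym] at h
      split at h
      · omega
      · rename_i hne
        intro hx
        simp at hx
        exact hne hx.symm
  | plus l r ihl ihr =>
      intro h s hs
      simp only [countSym, Nat.add_eq_zero] at h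
      rw [matchesPlus] at hs
      rcases hs with hs | hs
      · exact ihl h.1 s hs
      · exact ihr h.2 s hs
  | comp l r ihl ihr =>
      intro h s hs
      simp only [countSym, Nat.add_eq_zero] at h
      rw [matchesComp, Language.mem_mul] at hs
      obtain ⟨a, ha, b, hb, rfl⟩ := hs
      intro hx
      rcases List.mem_append.mp hx with hx | hx
      · exact ihl h.1 a ha hx
      · exact ihr h.2 b hb hx
  | star g ih =>
      intro h s hs
      rw [matchesStar, Language.mem_kstar] at hs
      obtain ⟨L, rfl, hL⟩ := hs
      intro hx
      obtain ⟨l, hl, hxl⟩ := List.mem_flatten.mp hx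
      exact ih h l (hL l hl) hxl

lemma split_right {α : Type*} (x : α) :
    ∀ (a : List α) (b c d : List α), a ++ x :: b = c ++ d → x ∉ d →
      ∃ t, c = a ++ x :: t ∧ b = t ++ d := by
  intro a
  induction a with
  | nil =>
      intro b c d h hx
      cases c with
      | nil =>
          simp only [List.nil_append] at h
          rw [← h] at hx
          simp at hx
      | cons y c' =>
          simp only [List.nil_append, List.cons_append, List.cons.injEq] at h
          exact ⟨c', by simp [h.1], h.2⟩
  | cons y a' ih =>
      intro b c d h hx
      cases c with
      | nil =>
          simp only [List.nil_append] at h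
          rw [← h] at hx
          simp at hx
      | cons z c' =>
          simp only [List.cons_append, List.cons.injEq] at h
          obtain ⟨t, ht1, ht2⟩ := ih b c' d h.2 hx
          exact ⟨t, by simp [h.1, ht1], ht2⟩

lemma split_left {α : Type*} (x : α) :
    ∀ (c : List α) (a b d : List α), a ++ x :: b = c ++ d → x ∉ c →
      ∃ t, d = t ++ x :: b ∧ a = c ++ t := by
  intro c
  induction c with
  | nil => intro a b d h _; exact ⟨a, by simpa using h.symm, by simp⟩
  | cons y c' ih =>
      intro a b d h hx
      cases a with
      | nil =>
          simp only [List.nil_append, List.cons_append, List.cons.injEq] at h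
          simp [h.1] at hx
      | cons z a' =>
          simp only [List.cons_append, List.cons.injEq] at h
          obtain ⟨t, ht1, ht2⟩ := ih a' b d h.2 (fun hc => hx (List.mem_cons_of_mem _ hc))
          exact ⟨t, ht1, by simp [h.1, ht2]⟩

/-- Decompose a flatten containing a marked symbol position. -/
lemma flatten_split {α : Type*} (x : α) :
    ∀ (L : List (List α)) (u v : List α), L.flatten = u ++ x :: v →
      ∃ (L₁ L₂ : List (List α)) (p q : List α),
        u = L₁.flatten ++ p ∧ v = q ++ L₂.flatten ∧
        (∀ y ∈ L₁, y ∈ L) ∧ (∀ y ∈ L₂, y ∈ L) ∧ (p ++ x :: q) ∈ L := by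
  intro L
  induction L with
  | nil => intro u v h; simp at h
  | cons s L' ih =>
      intro u v h
      simp only [List.flatten_cons] at h
      rcases List.append_eq_append_iff.mp h.symm with ⟨t, ht1, ht2⟩ | ⟨t, ht1, ht2⟩
      · -- s = u ++ t, x :: v = t ++ L'.flatten
        cases t with
        | nil =>
            obtain ⟨L₁, L₂, p, q, hp, hq, hL₁, hL₂, hmem⟩ := ih [] v (by simpa using ht2.symm)
            have hp' : L₁.flatten ++ p = [] := hp.symm
            refine ⟨s :: L₁, L₂, p, q, ?_, hq, ?_, fun y hy => List.mem_cons_of_mem _ (hL₂ y hy),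
              List.mem_cons_of_mem _ hmem⟩
            · rw [List.flatten_cons, List.append_assoc, hp', List.append_nil, ht1,
                List.append_nil]
            · intro y hy
              rcases List.mem_cons.mp hy with rfl | hy
              · exact List.mem_cons_self
              · exact List.mem_cons_of_mem _ (hL₁ y hy)
        | cons z t' =>
            simp only [List.cons_append, List.cons.injEq] at ht2
            refine ⟨[], L', u, t', by simp, ?_, by simp, fun y hy => List.mem_cons_of_mem _ hy, ?_⟩
            · exact ht2.2
            · have : s = u ++ x :: t' := by rw [ht1, ht2.1]
              rw [← this]
              exact List.mem_cons_self
      · -- u = s ++ t, L'.flatten = t ++ x :: v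
        obtain ⟨L₁, L₂, p, q, hp, hq, hL₁, hL₂, hmem⟩ := ih t v ht2
        refine ⟨s :: L₁, L₂, p, q, ?_, hq, ?_, fun y hy => List.mem_cons_of_mem _ (hL₂ y hy),
          List.mem_cons_of_mem _ hmem⟩
        · simp [ht1, hp]
        · intro y hy
          rcases List.mem_cons.mp hy with rfl | hy
          · exact List.mem_cons_self
          · exact List.mem_cons_of_mem _ (hL₁ y hy)

/-- **Splice lemma.** If a symbol `x` appears exactly once in a regular expression `g`,
and both `u ++ [x] ++ v'` and `u' ++ [x] ++ v` are in the language of `g`,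
then the spliced string `u ++ [x] ++ v` is also in the language of `g`. -/
theorem splice {α : Type*} [DecidableEq α] (g : RegularExpression α) (x : α)
    (hunique : countSym g x = 1) (u v' u' v : List α)
    (h₁ : u ++ [x] ++ v' ∈ g.matches')
    (h₂ : u' ++ [x] ++ v ∈ g.matches') :
    u ++ [x] ++ v ∈ g.matches' := by
  induction g generalizing u v' u' v with
  | zero => simp [matchesZero] at h₁
  | epsilon =>
      rw [matchesEps, Language.mem_one] at h₁
      simp at h₁
  | char a =>
      rw [matchesChar] at h₁ h₂ ⊢
      change u ++ [x] ++ v' = [a] at h₁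
      change u' ++ [x] ++ v = [a] at h₂
      change u ++ [x] ++ v = [a]
      cases u with
      | cons y u => simp at h₁
      | nil =>
          cases u' with
          | cons y u' => simp at h₂
          | nil =>
              simp only [List.nil_append] at h₂ ⊢
              exact h₂
  | plus l r ihl ihr =>
      rw [matchesPlus] at h₁ h₂ ⊢
      simp only [countSym] at hunique
      have hcase : (countSym l x = 1 ∧ countSym r x = 0) ∨
          (countSym l x = 0 ∧ countSym r x = 1) := by omega
      have hxmem : x ∈ u ++ [x] ++ v' := by simp
      have hxmem' : x ∈ u' ++ [x] ++ v := by simp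
      rcases hcase with ⟨hl, hr⟩ | ⟨hl, hr⟩
      · have m₁ : u ++ [x] ++ v' ∈ l.matches' := by
          rcases h₁ with h | h
          · exact h
          · exact absurd hxmem (notMem_of_countSym_zero r x hr _ h)
        have m₂ : u' ++ [x] ++ v ∈ l.matches' := by
          rcases h₂ with h | h
          · exact h
          · exact absurd hxmem' (notMem_of_countSym_zero r x hr _ h)
        exact Or.inl (ihl hl u v' u' v m₁ m₂)
      · have m₁ : u ++ [x] ++ v' ∈ r.matches' := by
          rcases h₁ with h | h
          · exact absurd hxmem (notMem_of_countSym_zero l x hl _ h)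
          · exact h
        have m₂ : u' ++ [x] ++ v ∈ r.matches' := by
          rcases h₂ with h | h
          · exact absurd hxmem' (notMem_of_countSym_zero l x hl _ h)
          · exact h
        exact Or.inr (ihr hr u v' u' v m₁ m₂)
  | comp l r ihl ihr =>
      rw [matchesComp, Language.mem_mul] at h₁ h₂ ⊢
      simp only [countSym] at hunique
      have hcase : (countSym l x = 1 ∧ countSym r x = 0) ∨
          (countSym l x = 0 ∧ countSym r x = 1) := by omega
      obtain ⟨a₁, ha₁, b₁, hb₁, he₁⟩ := h₁
      obtain ⟨a₂, ha₂, b₂, hb₂, he₂⟩ := h₂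
      rcases hcase with ⟨hl, hr⟩ | ⟨hl, hr⟩
      · have hx₁ : x ∉ b₁ := notMem_of_countSym_zero r x hr _ hb₁
        have hx₂ : x ∉ b₂ := notMem_of_countSym_zero r x hr _ hb₂
        obtain ⟨t₁, ht₁c, ht₁d⟩ := split_right x u v' a₁ b₁ (by simpa using he₁.symm) hx₁
        obtain ⟨t₂, ht₂c, ht₂d⟩ := split_right x u' v a₂ b₂ (by simpa using he₂.symm) hx₂
        have m₁ : u ++ [x] ++ t₁ ∈ l.matches' := by rw [ht₁c] at ha₁; simpa using ha₁
        have m₂ : u' ++ [x] ++ t₂ ∈ l.matches' := by rw [ht₂c] at ha₂; simpa using ha₂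
        exact ⟨u ++ [x] ++ t₂, ihl hl u t₁ u' t₂ m₁ m₂, b₂, hb₂, by simp [ht₂d]⟩
      · have hx₁ : x ∉ a₁ := notMem_of_countSym_zero l x hl _ ha₁
        have hx₂ : x ∉ a₂ := notMem_of_countSym_zero l x hl _ ha₂
        obtain ⟨t₁, ht₁d, ht₁a⟩ := split_left x a₁ u v' b₁ (by simpa using he₁.symm) hx₁
        obtain ⟨t₂, ht₂d, ht₂a⟩ := split_left x a₂ u' v b₂ (by simpa using he₂.symm) hx₂
        have m₁ : t₁ ++ [x] ++ v' ∈ r.matches' := by rw [ht₁d] at hb₁; simpa using hb₁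
        have m₂ : t₂ ++ [x] ++ v ∈ r.matches' := by rw [ht₂d] at hb₂; simpa using hb₂
        exact ⟨a₁, ha₁, t₁ ++ [x] ++ v, ihr hr t₁ v' t₂ v m₁ m₂, by simp [ht₁a]⟩
  | star g ih =>
      rw [matchesStar, Language.mem_kstar] at h₁ h₂ ⊢
      obtain ⟨L₁, hL₁e, hL₁⟩ := h₁
      obtain ⟨L₂, hL₂e, hL₂⟩ := h₂
      simp only [countSym] at hunique
      obtain ⟨A, _, p, q, hp, _, hA, _, hmem⟩ :=
        flatten_split x L₁ u v' (by simpa using hL₁e.symm)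
      obtain ⟨_, B, p', q', _, hq', _, hB, hmem'⟩ :=
        flatten_split x L₂ u' v (by simpa using hL₂e.symm)
      have hsp : p ++ [x] ++ q' ∈ g.matches' := by
        have := ih hunique p q p' q' (by simpa [hmem] using hL₁ _ hmem)
          (by simpa using hL₂ _ hmem')
        simpa using this
      refine ⟨A ++ [p ++ [x] ++ q'] ++ B, ?_, ?_⟩
      · simp [hp, hq']
      · intro y hy
        simp only [List.append_assoc, List.mem_append, List.mem_cons, List.not_mem_nil,
          or_false] at hy
        rcases hy with hy | hy
        · exact hL₁ y (hA y hy)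
        · rcases hy with rfl | hy
          · simpa using hsp
          · exact hL₂ y (hB y hy)
end

section
/- Grout precedence characterization: (1) if γ is a left-convex grout then τ ⊙_{σ?} γ^s holds if and only if σ? is empty and ⊙ = ⋖; (2) if γ_R is a left-concave grout then τ ≐_{σ?} γ_R^s holds if and only if σ? = ⌊0s⌋ (the zero-bounded sort nonterminal) and τ = γ_L^s for some right-concave grout γ_L of the same sort. -/
/-- The four grout shapes, determined by convexity of the left/right tips. -/
inductive Grout where
  | operand   -- convex on both sides
  | preG      -- left-convex, right-concave (prefix grout `≺-hole`)
  | postG     -- left-concave, right-convex (postfix grout `≻-hole`)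
  | infG      -- concave on both sides (infix grout `⋈-hole`)

def leftConvex : Grout → Prop
  | .operand => True | .preG => True | .postG => False | .infG => False

def rightConvex : Grout → Prop
  | .operand => True | .preG => False | .postG => True | .infG => False

def leftConcave (γ : Grout) : Prop := ¬ leftConvex γ

def rightConcave (γ : Grout) : Prop := ¬ rightConvex γ

/-- Nonterminals of the grout-injected grammar: `⊥s⟨⊥,⊥⟩` and the zero-bounded `0s`. -/
inductive GNT (Srt : Type) where
  | bot : Srt → GNT Srt
  | zero : Srt → GNT Srt

/-- Tokens: tiles or sorted grout `γ^s`. -/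
inductive GTok (Tile Srt : Type) where
  | tile : Tile → GTok Tile Srt
  | grout : Grout → Srt → GTok Tile Srt

/-- Symbols of the grout-injected grammar. -/
inductive GSym (Tile Srt : Type) where
  | tk : GTok Tile Srt → GSym Tile Srt
  | nt : GNT Srt → GSym Tile Srt

/-- `GChain s γf γl w`: `w` is an alternation of grout tokens of sort `s` and
zero-bounded slots `0s`, starting with grout `γf` and ending with grout `γl`,
where consecutive grout fit concavely. -/
inductive GChain (Tile Srt : Type) (s : Srt) : Grout → Grout → List (GSym Tile Srt) → Prop where
  | single (γ : Grout) : GChain Tile Srt s γ γ [GSym.tk (GTok.grout γ s)]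
  | cons {γf γ γ' : Grout} {w : List (GSym Tile Srt)} :
      rightConcave γ → leftConcave γ' → GChain Tile Srt s γf γ w →
      GChain Tile Srt s γf γ' (w ++ [GSym.nt (GNT.zero s), GSym.tk (GTok.grout γ' s)])

/-- The grout-injection production rules: `0s ↘ ⬒-hole^s` (operand rule) and
`⊥s ↘ γ₀ (0s γ₁) ⋯ (0s γₖ)` for grout chains with a left-convex start and
right-convex end (covering `⊥s ↘ ≺-hole^s (0s ⋈-hole^s)* …` and the symmetric
postfix rule). -/
inductive GProd (Tile Srt : Type) : GNT Srt → List (GSym Tile Srt) → Prop where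
  | operandR (s : Srt) : GProd Tile Srt (GNT.zero s) [GSym.tk (GTok.grout Grout.operand s)]
  | chainR {s : Srt} {γf γl : Grout} {w : List (GSym Tile Srt)} :
      leftConvex γf → rightConvex γl → GChain Tile Srt s γf γl w →
      GProd Tile Srt (GNT.bot s) w

/-- Optional slot as a (possibly empty) string. -/
def optSlot {Tile Srt : Type} : Option (GNT Srt) → List (GSym Tile Srt)
  | none => []
  | some X => [GSym.nt X]

/-- First token of strings derivable from a nonterminal, with its optional leading slot. -/
inductive FirstT (Tile Srt : Type) : GNT Srt → Option (GNT Srt) → GTok Tile Srt → Prop where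
  | here {X : GNT Srt} {b : GTok Tile Srt} {w} :
      GProd Tile Srt X (GSym.tk b :: w) → FirstT Tile Srt X none b
  | hereSlot {X Y : GNT Srt} {b : GTok Tile Srt} {w} :
      GProd Tile Srt X (GSym.nt Y :: GSym.tk b :: w) → FirstT Tile Srt X (some Y) b
  | trans {X Y : GNT Srt} {σ? : Option (GNT Srt)} {b : GTok Tile Srt} {w} :
      GProd Tile Srt X (GSym.nt Y :: w) → FirstT Tile Srt Y σ? b → FirstT Tile Srt X σ? b

/-- Last token of strings derivable from a nonterminal, with its optional trailing slot. -/
inductive LastT (Tile Srt : Type) : GNT Srt → Option (GNT Srt) → GTok Tile Srt → Prop where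
  | here {X : GNT Srt} {a : GTok Tile Srt} {w} :
      GProd Tile Srt X (w ++ [GSym.tk a]) → LastT Tile Srt X none a
  | hereSlot {X Y : GNT Srt} {a : GTok Tile Srt} {w} :
      GProd Tile Srt X (w ++ [GSym.tk a, GSym.nt Y]) → LastT Tile Srt X (some Y) a
  | trans {X Y : GNT Srt} {σ? : Option (GNT Srt)} {a : GTok Tile Srt} {w} :
      GProd Tile Srt X (w ++ [GSym.nt Y]) → LastT Tile Srt Y σ? a → LastT Tile Srt X σ? a

/-- The three precedence relation labels. -/
inductive POp where
  | lt | eq | gt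

/-- Slot-indexed precedence relations `⊙_{σ?} ∈ {⋖,≐,⋗}` derived from the productions. -/
inductive PrecRel (Tile Srt : Type) :
    POp → Option (GNT Srt) → GTok Tile Srt → GTok Tile Srt → Prop where
  | eqR {X : GNT Srt} {u v : List (GSym Tile Srt)} {a b : GTok Tile Srt}
      {σ? : Option (GNT Srt)} :
      GProd Tile Srt X (u ++ [GSym.tk a] ++ optSlot σ? ++ [GSym.tk b] ++ v) →
      PrecRel Tile Srt POp.eq σ? a b
  | ltR {X Y : GNT Srt} {u v : List (GSym Tile Srt)} {a b : GTok Tile Srt}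
      {σ? : Option (GNT Srt)} :
      GProd Tile Srt X (u ++ [GSym.tk a, GSym.nt Y] ++ v) → FirstT Tile Srt Y σ? b →
      PrecRel Tile Srt POp.lt σ? a b
  | gtR {X Y : GNT Srt} {u v : List (GSym Tile Srt)} {a b : GTok Tile Srt}
      {σ? : Option (GNT Srt)} :
      GProd Tile Srt X (u ++ [GSym.nt Y, GSym.tk b] ++ v) → LastT Tile Srt Y σ? a →
      PrecRel Tile Srt POp.gt σ? a b

namespace GroutAux

variable {Tile Srt : Type}

/-- Allowed adjacencies inside a grout chain word. -/
def AdjOK (s : Srt) (x y : GSym Tile Srt) : Prop :=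
  (∃ γ, rightConcave γ ∧ x = GSym.tk (GTok.grout γ s) ∧ y = GSym.nt (GNT.zero s)) ∨
  (∃ γ, leftConcave γ ∧ x = GSym.nt (GNT.zero s) ∧ y = GSym.tk (GTok.grout γ s))

lemma chain_struct {s : Srt} {γf γl : Grout} {w : List (GSym Tile Srt)}
    (h : GChain Tile Srt s γf γl w) :
    w.Chain' (AdjOK s) ∧ (∃ w', w = GSym.tk (GTok.grout γf s) :: w')
      ∧ (∃ w'', w = w'' ++ [GSym.tk (GTok.grout γl s)]) := by
  induction h with
  | single => exact ⟨List.isChain_singleton _, ⟨[], rfl⟩, ⟨[], rfl⟩⟩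
  | cons hrc hlc hch ih =>
    rename_i γ γ' w₀
    obtain ⟨hc, ⟨w', hw'⟩, ⟨w'', hw''⟩⟩ := ih
    refine ⟨?_, ⟨w' ++ [GSym.nt (GNT.zero s), GSym.tk (GTok.grout γ' s)], by
        simp [hw']⟩,
      ⟨w₀ ++ [GSym.nt (GNT.zero s)], by simp⟩⟩
    change List.IsChain (AdjOK s) _
    rw [List.isChain_append]
    refine ⟨hc, ?_, ?_⟩
    · exact List.IsChain.cons_cons (Or.inr ⟨γ', hlc, rfl, rfl⟩) (List.isChain_singleton _)
    · intro x hx y hy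
      rw [hw''] at hx
      simp at hx hy
      subst hx; subst hy
      exact Or.inl ⟨γ, hrc, rfl, rfl⟩

lemma prod_adj {X : GNT Srt} {w : List (GSym Tile Srt)} (h : GProd Tile Srt X w)
    {u v : List (GSym Tile Srt)} {x y : GSym Tile Srt} (hw : w = u ++ x :: y :: v) :
    ∃ s : Srt, AdjOK s x y := by
  cases h with
  | operandR s =>
    cases u with
    | nil => simp at hw
    | cons a u => simp at hw
  | @chainR s γf γl w hlcv hrcv hch =>
    refine ⟨s, ?_⟩
    have hc := (chain_struct hch).1
    have hinf : [x, y] <:+: w := ⟨u, v, by simp [hw]⟩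
    have := hc.infix hinf
    simpa [List.isChain_cons_cons] using this

lemma prod_head {X : GNT Srt} {w : List (GSym Tile Srt)} (h : GProd Tile Srt X w) :
    ∃ t w', w = GSym.tk t :: w' := by
  cases h with
  | operandR s => exact ⟨_, _, rfl⟩
  | chainR hlcv hrcv hch =>
    obtain ⟨-, ⟨w', hw'⟩, -⟩ := chain_struct hch
    exact ⟨_, _, hw'⟩

lemma firstT_none {X : GNT Srt} {σ? : Option (GNT Srt)} {b : GTok Tile Srt}
    (h : FirstT Tile Srt X σ? b) : σ? = none := by
  induction h with
  | here _ => rfl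
  | hereSlot hp => obtain ⟨t, w', hw⟩ := prod_head hp; simp at hw
  | trans hp _ ih => obtain ⟨t, w', hw⟩ := prod_head hp; simp at hw

lemma rc_cases {γ : Grout} (h : rightConcave γ) : γ = Grout.preG ∨ γ = Grout.infG := by
  cases γ <;> simp_all [rightConcave, rightConvex]

lemma lc_cases {γ : Grout} (h : leftConcave γ) : γ = Grout.postG ∨ γ = Grout.infG := by
  cases γ <;> simp_all [leftConcave, leftConvex]

/-- Construction for the backward direction of part (2). -/
lemma eq_construct {γL γR : Grout} (hL : rightConcave γL) (hR : leftConcave γR) (s : Srt) :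
    PrecRel Tile Srt POp.eq (some (GNT.zero s)) (GTok.grout γL s) (GTok.grout γR s) := by
  have hpre : leftConvex Grout.preG := trivial
  have hpost : rightConvex Grout.postG := trivial
  have hrcpre : rightConcave Grout.preG := by simp [rightConcave, rightConvex]
  have hrcinf : rightConcave Grout.infG := by simp [rightConcave, rightConvex]
  have hlcpost : leftConcave Grout.postG := by simp [leftConcave, leftConvex]
  have hlcinf : leftConcave Grout.infG := by simp [leftConcave, leftConvex]
  rcases rc_cases hL with h | h <;> rcases lc_cases hR with h' | h' <;>
    subst h <;> subst h'
  · have hprod := GProd.chainR (Tile := Tile) (s := s) hpre hpost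
      (GChain.cons hrcpre hlcpost (GChain.single Grout.preG))
    exact PrecRel.eqR (u := []) (v := []) (σ? := some (GNT.zero s))
      (by simpa [optSlot] using hprod)
  · have hprod := GProd.chainR (Tile := Tile) (s := s) hpre hpost
      (GChain.cons hrcinf hlcpost (GChain.cons hrcpre hlcinf (GChain.single Grout.preG)))
    exact PrecRel.eqR (u := [])
      (v := [GSym.nt (GNT.zero s), GSym.tk (GTok.grout Grout.postG s)])
      (σ? := some (GNT.zero s)) (by simpa [optSlot] using hprod)
  · have hprod := GProd.chainR (Tile := Tile) (s := s) hpre hpost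
      (GChain.cons hrcinf hlcpost (GChain.cons hrcpre hlcinf (GChain.single Grout.preG)))
    exact PrecRel.eqR
      (u := [GSym.tk (GTok.grout Grout.preG s), GSym.nt (GNT.zero s)]) (v := [])
      (σ? := some (GNT.zero s)) (by simpa [optSlot] using hprod)
  · have hprod := GProd.chainR (Tile := Tile) (s := s) hpre hpost
      (GChain.cons hrcinf hlcpost (GChain.cons hrcinf hlcinf
        (GChain.cons hrcpre hlcinf (GChain.single Grout.preG))))
    exact PrecRel.eqR
      (u := [GSym.tk (GTok.grout Grout.preG s), GSym.nt (GNT.zero s)])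
      (v := [GSym.nt (GNT.zero s), GSym.tk (GTok.grout Grout.postG s)])
      (σ? := some (GNT.zero s)) (by simpa [optSlot] using hprod)

end GroutAux

/-- **Grout precedence characterization (Lemma `grout-prec`).**
(1) If `γ` is a left-convex grout then `τ ⊙_{σ?} γ^s` holds iff `σ?` is empty and
`⊙ = ⋖`; (2) if `γ_R` is a left-concave grout then `τ ≐_{σ?} γ_R^s` holds iff
`σ? = ⌊0s⌋` and `τ = γ_L^s` for some right-concave grout `γ_L` of the same sort. -/
theorem grout_prec (Tile Srt : Type) :
    (∀ (γ : Grout) (s : Srt) (τ : GTok Tile Srt) (o : POp) (σ? : Option (GNT Srt)),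
      leftConvex γ →
        (PrecRel Tile Srt o σ? τ (GTok.grout γ s) ↔
          σ? = none ∧ o = POp.lt ∧ PrecRel Tile Srt POp.lt none τ (GTok.grout γ s))) ∧
    (∀ (γR : Grout) (s : Srt) (τ : GTok Tile Srt) (σ? : Option (GNT Srt)),
      leftConcave γR →
        (PrecRel Tile Srt POp.eq σ? τ (GTok.grout γR s) ↔
          σ? = some (GNT.zero s) ∧
          ∃ γL : Grout, rightConcave γL ∧ τ = GTok.grout γL s)) := by
  open GroutAux in
  constructor
  · intro γ s τ o σ? hγ
    constructor
    · intro h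
      cases h with
      | @eqR X u v a b σ? hp =>
        exfalso
        cases σ? with
        | none =>
          obtain ⟨s', hadj⟩ := prod_adj hp
            (u := u) (v := v) (x := GSym.tk τ) (y := GSym.tk (GTok.grout γ s))
            (by simp [optSlot])
          rcases hadj with ⟨γ', _, _, hy⟩ | ⟨γ', _, hx, _⟩ <;> simp_all
        | some Y =>
          obtain ⟨s', hadj⟩ := prod_adj hp
            (u := u ++ [GSym.tk τ]) (v := v) (x := GSym.nt Y)
            (y := GSym.tk (GTok.grout γ s)) (by simp [optSlot])
          rcases hadj with ⟨γ', _, hx, _⟩ | ⟨γ', hlc, _, hy⟩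
          · simp at hx
          · injection hy with hy'
            injection hy' with h1 h2
            subst h1
            exact hlc hγ
      | ltR hp hf =>
        have hn := firstT_none hf
        subst hn
        exact ⟨rfl, rfl, PrecRel.ltR hp hf⟩
      | @gtR X Y u v a b σ? hp hl =>
        exfalso
        obtain ⟨s', hadj⟩ := prod_adj hp
          (u := u) (v := v) (x := GSym.nt Y) (y := GSym.tk (GTok.grout γ s))
          (by simp)
        rcases hadj with ⟨γ', _, hx, _⟩ | ⟨γ', hlc, _, hy⟩
        · simp at hx
        · injection hy with hy'
          injection hy' with h1 h2
          subst h1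
          exact hlc hγ
    · rintro ⟨rfl, rfl, h⟩
      exact h
  · intro γR s τ σ? hγR
    constructor
    · intro h
      cases h with
      | @eqR X u v a b σ? hp =>
        cases σ? with
        | none =>
          exfalso
          obtain ⟨s', hadj⟩ := prod_adj hp
            (u := u) (v := v) (x := GSym.tk τ) (y := GSym.tk (GTok.grout γR s))
            (by simp [optSlot])
          rcases hadj with ⟨γ', _, _, hy⟩ | ⟨γ', _, hx, _⟩ <;> simp_all
        | some Y =>
          obtain ⟨s₁, hadj1⟩ := prod_adj hp
            (u := u) (v := GSym.tk (GTok.grout γR s) :: v) (x := GSym.tk τ)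
            (y := GSym.nt Y) (by simp [optSlot])
          obtain ⟨s₂, hadj2⟩ := prod_adj hp
            (u := u ++ [GSym.tk τ]) (v := v) (x := GSym.nt Y)
            (y := GSym.tk (GTok.grout γR s)) (by simp [optSlot])
          rcases hadj2 with ⟨γ', _, hx, _⟩ | ⟨γ', _, hx, hy⟩
          · simp at hx
          · injection hy with hy'
            injection hy' with h1 h2
            subst h2
            injection hx with hx'
            rcases hadj1 with ⟨γ'', hrc, hτ, hY⟩ | ⟨γ'', _, hτ, _⟩
            · injection hY with hY'
              have hs : GNT.zero s₁ = (GNT.zero s : GNT Srt) := hY'.symm.trans hx'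
              injection hs with hs'
              subst hs'
              injection hτ with hτ'
              exact ⟨by rw [hx'], γ'', hrc, hτ'⟩
            · simp at hτ
    · rintro ⟨rfl, γL, hγL, rfl⟩
      exact eq_construct hγL hγR s
end

section
/- Sort-transition unbounding: if s⟨p,q⟩ reaches r⟨m,n⟩ via a chain of leftmost-corner steps (◁*) and the sorts differ (s ≠ r), then s⟨p,q⟩ also reaches the fully-unbounded nonterminal ⊥r = r⟨⊥,⊥⟩ via leftmost-corner steps. -/
/-- Nonterminals `s⟨p,q⟩`: a sort with left and right precedence bounds. -/
structure BNT (ν P : Type) where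
  sort : ν
  lo : P
  hi : P

/-- **Lemma `unbounded-sort-transition`.** Suppose the leftmost-corner relation `◁`
of the elaborated grammar satisfies: every cross-sort step targets a fully-unbounded
nonterminal `r⟨⊥,⊥⟩`. If `s⟨p,q⟩ ◁* r⟨m,n⟩` and the sorts differ (`s ≠ r`), then
`s⟨p,q⟩ ◁* ⊥r = r⟨⊥,⊥⟩`. -/
theorem unbounded_sort_transition {ν P : Type} [Bot P]
    (LC : BNT ν P → BNT ν P → Prop)
    (hcross : ∀ σ ρ : BNT ν P, LC σ ρ → σ.sort ≠ ρ.sort → ρ.lo = ⊥ ∧ ρ.hi = ⊥)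
    {s r : ν} {p q m n : P}
    (h : Relation.ReflTransGen LC ⟨s, p, q⟩ ⟨r, m, n⟩)
    (hne : s ≠ r) :
    Relation.ReflTransGen LC ⟨s, p, q⟩ ⟨r, ⊥, ⊥⟩ := by
  suffices H : ∀ τ : BNT ν P, Relation.ReflTransGen LC ⟨s, p, q⟩ τ → τ.sort = r →
      Relation.ReflTransGen LC ⟨s, p, q⟩ ⟨r, ⊥, ⊥⟩ from H ⟨r, m, n⟩ h rfl
  intro τ h
  induction h with
  | refl => intro hτ; exact absurd hτ hne
  | @tail b c h' step ih =>
    intro hc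
    by_cases hb : b.sort = r
    · exact ih hb
    · obtain ⟨h1, h2⟩ := hcross b c step (by rw [hc]; exact hb)
      obtain ⟨cs, cl, ch⟩ := c
      simp only at hc h1 h2
      subst hc h1 h2
      exact h'.tail step
end
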